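/- Let (X,T) be a minimal mean equicontinuous topological dynamical system whose maximal equicontinuous factor map π_eq: X→X_eq is almost finite-to-one (there exists y∈X_eq with π_eq⁻¹(y) finite). Then π_eq is almost 1-1. -/

import Mathlib

open Filter Metric Set MeasureTheory

noncomputable section

/-- Upper density of a set of nonnegative integers. -/
def upperDensity (F : Set ℕ) : ℝ :=
  Filter.atTop.limsup fun n : ℕ => ((F ∩ Set.Ico 0 n).ncard : ℝ) / n

/-- Upper Banach density of a set of nonnegative integers. -/
def banachDensity (F : Set ℕ) : ℝ :=
  Filter.atTop.limsup fun n : ℕ => ⨆ M : ℕ, ((F ∩ Set.Ico M (M + n)).ncard : ℝ) / n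

variable {X Y : Type} [MetricSpace X] [MetricSpace Y]

/-- A t.d.s. is minimal if every forward orbit is dense. -/
def IsMinimalTDS (T : X → X) : Prop := ∀ x : X, Dense (Set.range fun n : ℕ => T^[n] x)

/-- A factor map between topological dynamical systems. -/
def IsFactorMap (T : X → X) (S : Y → Y) (π : X → Y) : Prop :=
  Continuous π ∧ Function.Surjective π ∧ π ∘ T = S ∘ π

/-- Uniform equicontinuity of the family of iterates. -/
def IsEquicontinuousSys (T : X → X) : Prop :=
  ∀ ε > 0, ∃ δ > 0, ∀ x y : X, dist x y < δ → ∀ n : ℕ, dist (T^[n] x) (T^[n] y) < ε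

/-- Birkhoff average of the distance of two orbits. -/
def birkhoffDist (T : X → X) (x y : X) (n : ℕ) : ℝ :=
  (∑ i ∈ Finset.Icc 1 n, dist (T^[i] x) (T^[i] y)) / n

/-- The Besicovitch pseudometric. -/
def besicovitch (T : X → X) (x y : X) : ℝ := Filter.atTop.limsup (birkhoffDist T x y)

/-- Mean equicontinuity. -/
def MeanEquicontinuous (T : X → X) : Prop :=
  ∀ ε > 0, ∃ δ > 0, ∀ x y : X, dist x y ≤ δ → besicovitch T x y ≤ ε

/-- Cesàro average of the diameters of the iterates of a set. -/
def diamAvg (T : X → X) (U : Set X) (n : ℕ) : ℝ :=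
  (∑ i ∈ Finset.Icc 1 n, Metric.diam (T^[i] '' U)) / n

/-- Diam-mean equicontinuity point. -/
def DiamMeanEqPt (T : X → X) (x : X) : Prop :=
  ∀ ε > 0, ∃ δ > 0, Filter.atTop.limsup (diamAvg T (Metric.ball x δ)) < ε

/-- Diam-mean equicontinuity. -/
def DiamMeanEquicontinuous (T : X → X) : Prop := ∀ x : X, DiamMeanEqPt T x

/-- Best average of diameters over windows of length `n`. -/
def banachDiamAvg (T : X → X) (U : Set X) (n : ℕ) : ℝ :=
  ⨆ M : ℕ, (∑ i ∈ Finset.Icc (M + 1) (M + n), Metric.diam (T^[i] '' U)) / n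

/-- Banach diam-mean equicontinuity point. -/
def BanachDiamMeanEqPt (T : X → X) (x : X) : Prop :=
  ∀ ε > 0, ∃ δ > 0, Filter.atTop.limsup (banachDiamAvg T (Metric.ball x δ)) < ε

/-- Banach diam-mean equicontinuity. -/
def BanachDiamMeanEquicontinuous (T : X → X) : Prop := ∀ x : X, BanachDiamMeanEqPt T x

/-- `π` is the maximal equicontinuous factor map of `(X,T)`, with factor system `(Y,S)`. -/
def IsMEF (T : X → X) (S : Y → Y) (π : X → Y) : Prop :=
  IsFactorMap T S π ∧ IsEquicontinuousSys S ∧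
    ∀ (Z : Type) [MetricSpace Z] [CompactSpace Z] (R : Z → Z) (φ : X → Z),
      IsFactorMap T R φ → IsEquicontinuousSys R →
        ∃ ψ : Y → Z, Continuous ψ ∧ ψ ∘ π = φ ∧ ψ ∘ S = R ∘ ψ

/-! ### Auxiliary development -/

namespace MefAux

open Function

section Bes

variable [CompactSpace X]

lemma dist_le_diam_univ (x y : X) : dist x y ≤ Metric.diam (Set.univ : Set X) :=
  Metric.dist_le_diam_of_mem isCompact_univ.isBounded (Set.mem_univ x) (Set.mem_univ y)

lemma birkhoff_nonneg (T : X → X) (x y : X) (n : ℕ) : 0 ≤ birkhoffDist T x y n :=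
  div_nonneg (Finset.sum_nonneg fun _ _ => dist_nonneg) n.cast_nonneg

lemma birkhoff_le (T : X → X) (x y : X) (n : ℕ) :
    birkhoffDist T x y n ≤ Metric.diam (Set.univ : Set X) := by
  rcases Nat.eq_zero_or_pos n with rfl | hn
  · simpa [birkhoffDist] using Metric.diam_nonneg
  · rw [birkhoffDist, div_le_iff₀ (by exact_mod_cast hn)]
    calc ∑ i ∈ Finset.Icc 1 n, dist (T^[i] x) (T^[i] y)
        ≤ (Finset.Icc 1 n).card • Metric.diam (Set.univ : Set X) :=
          Finset.sum_le_card_nsmul _ _ _ fun i _ => dist_le_diam_univ _ _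
      _ = Metric.diam (Set.univ : Set X) * n := by
          rw [Nat.card_Icc]; simp [nsmul_eq_mul, mul_comm]

lemma bk_bddA (T : X → X) (x y : X) :
    Filter.IsBoundedUnder (· ≤ ·) Filter.atTop (birkhoffDist T x y) :=
  Filter.isBoundedUnder_of ⟨_, fun n => birkhoff_le T x y n⟩

lemma bk_bddB (T : X → X) (x y : X) :
    Filter.IsBoundedUnder (· ≥ ·) Filter.atTop (birkhoffDist T x y) :=
  Filter.isBoundedUnder_of ⟨0, fun n => birkhoff_nonneg T x y n⟩

lemma bes_nonneg (T : X → X) (x y : X) : 0 ≤ besicovitch T x y :=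
  Filter.le_limsup_of_frequently_le
    (Filter.Frequently.of_forall fun n => birkhoff_nonneg T x y n) (bk_bddA T x y)

lemma bes_self (T : X → X) (x : X) : besicovitch T x x = 0 := by
  have h : birkhoffDist T x x = fun _ => (0 : ℝ) := by
    funext n; simp [birkhoffDist]
  rw [besicovitch, h, Filter.limsup_const]

lemma bes_symm (T : X → X) (x y : X) : besicovitch T x y = besicovitch T y x := by
  have h : birkhoffDist T x y = birkhoffDist T y x := by
    funext n; simp [birkhoffDist, dist_comm]
  rw [besicovitch, h, besicovitch]

lemma birkhoff_triangle (T : X → X) (x y z : X) (n : ℕ) :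
    birkhoffDist T x z n ≤ birkhoffDist T x y n + birkhoffDist T y z n := by
  rw [birkhoffDist, birkhoffDist, birkhoffDist, ← add_div]
  rcases Nat.eq_zero_or_pos n with rfl | hn
  · simp
  · rw [div_le_div_iff_of_pos_right (by exact_mod_cast hn : (0:ℝ) < n)]
    rw [← Finset.sum_add_distrib]
    exact Finset.sum_le_sum fun i _ => dist_triangle _ _ _

lemma bes_triangle (T : X → X) (x y z : X) :
    besicovitch T x z ≤ besicovitch T x y + besicovitch T y z := by
  have h1 : besicovitch T x z ≤
      Filter.atTop.limsup (birkhoffDist T x y + birkhoffDist T y z) :=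
    Filter.limsup_le_limsup (Filter.Eventually.of_forall fun n => birkhoff_triangle T x y z n)
      ((bk_bddB T x z).isCoboundedUnder_le)
      (Filter.isBoundedUnder_of ⟨_, fun n =>
        add_le_add (birkhoff_le T x y n) (birkhoff_le T y z n)⟩)
  exact h1.trans (limsup_add_le (bk_bddB T x y) (bk_bddA T x y)
    ((bk_bddB T y z).isCoboundedUnder_le) (bk_bddA T y z))

lemma bes_apply_le (T : X → X) (x y : X) :
    besicovitch T (T x) (T y) ≤ besicovitch T x y := by
  set D := Metric.diam (Set.univ : Set X) with hD
  have hD0 : 0 ≤ D := Metric.diam_nonneg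
  have key : ∀ n : ℕ, 1 ≤ n →
      birkhoffDist T (T x) (T y) n ≤ birkhoffDist T x y n + D / n := by
    intro n hn
    have hsum : ∑ i ∈ Finset.Icc 1 n, dist (T^[i] (T x)) (T^[i] (T y))
        ≤ (∑ i ∈ Finset.Icc 1 n, dist (T^[i] x) (T^[i] y)) + D := by
      have e1 : ∑ i ∈ Finset.Icc 1 n, dist (T^[i] (T x)) (T^[i] (T y))
          = ∑ i ∈ Finset.Icc 2 (n+1), dist (T^[i] x) (T^[i] y) := by
        have : Finset.Icc 2 (n+1) = (Finset.Icc 1 n).map (addRightEmbedding 1) := by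
          rw [Finset.map_add_right_Icc]
        rw [this, Finset.sum_map]
        refine Finset.sum_congr rfl fun i _ => ?_
        simp [addRightEmbedding, Function.iterate_succ_apply]
      rw [e1]
      have e2 : ∑ i ∈ Finset.Icc 2 (n+1), dist (T^[i] x) (T^[i] y)
          ≤ ∑ i ∈ Finset.Icc 1 (n+1), dist (T^[i] x) (T^[i] y) :=
        Finset.sum_le_sum_of_subset_of_nonneg
          (Finset.Icc_subset_Icc (by norm_num) le_rfl) (fun _ _ _ => dist_nonneg)
      have e3 : ∑ i ∈ Finset.Icc 1 (n+1), dist (T^[i] x) (T^[i] y)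
          = (∑ i ∈ Finset.Icc 1 n, dist (T^[i] x) (T^[i] y))
            + dist (T^[n+1] x) (T^[n+1] y) :=
        Finset.sum_Icc_succ_top (by omega) _
      have e4 : dist (T^[n+1] x) (T^[n+1] y) ≤ D := dist_le_diam_univ _ _
      linarith
    have hn0 : (0:ℝ) < n := by exact_mod_cast hn
    rw [birkhoffDist, birkhoffDist, ← add_div]
    exact (div_le_div_iff_of_pos_right hn0).2 hsum
  have hDlim : Filter.atTop.limsup (fun n : ℕ => D / n) = 0 :=
    (tendsto_const_div_atTop_nhds_zero_nat D).limsup_eq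
  have hDb : Filter.IsBoundedUnder (· ≤ ·) Filter.atTop (fun n : ℕ => D / n) :=
    (tendsto_const_div_atTop_nhds_zero_nat D).isBoundedUnder_le
  have hDb' : Filter.IsCoboundedUnder (· ≤ ·) Filter.atTop (fun n : ℕ => D / n) :=
    (Filter.isBoundedUnder_of ⟨0, fun n => by positivity⟩ :
      Filter.IsBoundedUnder (· ≥ ·) Filter.atTop _).isCoboundedUnder_le
  have h1 : besicovitch T (T x) (T y) ≤
      Filter.atTop.limsup (birkhoffDist T x y + fun n : ℕ => D / n) := by
    refine Filter.limsup_le_limsup ?_ ((bk_bddB T (T x) (T y)).isCoboundedUnder_le)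
      (Filter.isBoundedUnder_of ⟨D + D, fun n => add_le_add (birkhoff_le T x y n)
        (by rcases Nat.eq_zero_or_pos n with rfl | hn
            · simp [hD0]
            · exact div_le_self hD0 (by exact_mod_cast hn))⟩)
    filter_upwards [Filter.eventually_ge_atTop 1] with n hn
    exact key n hn
  have h2 := limsup_add_le (bk_bddB T x y) (bk_bddA T x y) hDb' hDb
  calc besicovitch T (T x) (T y)
      ≤ Filter.atTop.limsup (birkhoffDist T x y) + Filter.atTop.limsup (fun n : ℕ => D / n) :=
        h1.trans h2
    _ = besicovitch T x y := by rw [hDlim, add_zero, besicovitch]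

lemma bes_iterate_le (T : X → X) (x y : X) (n : ℕ) :
    besicovitch T (T^[n] x) (T^[n] y) ≤ besicovitch T x y := by
  induction n with
  | zero => simp
  | succ n ih =>
      calc besicovitch T (T^[n+1] x) (T^[n+1] y)
          = besicovitch T (T (T^[n] x)) (T (T^[n] y)) := by
            rw [Function.iterate_succ_apply', Function.iterate_succ_apply']
        _ ≤ besicovitch T (T^[n] x) (T^[n] y) := bes_apply_le T _ _
        _ ≤ besicovitch T x y := ih

/-- The setoid identifying points at Besicovitch distance zero. -/
def besSetoid (T : X → X) : Setoid X where
  r x y := besicovitch T x y = 0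
  iseqv := by
    refine ⟨fun x => bes_self T x, fun {x y} h => ?_, fun {x y z} h1 h2 => ?_⟩
    · rw [← bes_symm, h]
    · refine le_antisymm ?_ (bes_nonneg T x z)
      calc besicovitch T x z ≤ besicovitch T x y + besicovitch T y z := bes_triangle T x y z
        _ = 0 := by rw [h1, h2, add_zero]

/-- Quotient of `X` by the Besicovitch pseudometric. -/
def BesQuot (T : X → X) : Type := Quotient (besSetoid T)

lemma bes_congr (T : X → X) (a b c d : X) (hac : besicovitch T a c = 0)
    (hbd : besicovitch T b d = 0) : besicovitch T a b = besicovitch T c d := by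
  have h1 : ∀ p q r s : X, besicovitch T p r = 0 → besicovitch T q s = 0 →
      besicovitch T p q ≤ besicovitch T r s := by
    intro p q r s hpr hqs
    calc besicovitch T p q ≤ besicovitch T p r + besicovitch T r q := bes_triangle T _ _ _
      _ ≤ besicovitch T p r + (besicovitch T r s + besicovitch T s q) := by
          exact add_le_add (le_refl _) (bes_triangle T _ _ _)
      _ = besicovitch T r s := by
          rw [hpr, bes_symm T s q, hqs]; ring
  refine le_antisymm (h1 a b c d hac hbd) (h1 c d a b ?_ ?_)
  · rw [bes_symm]; exact hac
  · rw [bes_symm]; exact hbd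

noncomputable instance besQuotMetric (T : X → X) : MetricSpace (BesQuot T) where
  dist := Quotient.lift₂ (besicovitch T)
    (fun a b c d hac hbd => bes_congr T a b c d hac hbd)
  dist_self := fun z => Quotient.inductionOn z fun x => bes_self T x
  dist_comm := fun z w => Quotient.inductionOn₂ z w fun x y => bes_symm T x y
  dist_triangle := fun z w v => Quotient.inductionOn₃ z w v fun x y u => bes_triangle T x y u
  eq_of_dist_eq_zero := fun {z w} h => by
    induction z using Quotient.inductionOn
    induction w using Quotient.inductionOn
    exact Quotient.sound h

/-- The quotient map to the Besicovitch quotient. -/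
def bqmk (T : X → X) (x : X) : BesQuot T := Quotient.mk (besSetoid T) x

lemma bqmk_dist (T : X → X) (x y : X) : dist (bqmk T x) (bqmk T y) = besicovitch T x y := rfl

lemma bqmk_surjective (T : X → X) : Function.Surjective (bqmk T) := fun z =>
  Quotient.inductionOn z fun x => ⟨x, rfl⟩

/-- The induced map on the Besicovitch quotient. -/
def bqT (T : X → X) : BesQuot T → BesQuot T :=
  Quotient.map T (fun a b (hab : besicovitch T a b = 0) =>
    le_antisymm ((bes_apply_le T a b).trans_eq hab) (bes_nonneg T _ _))

lemma bqT_mk (T : X → X) (x : X) : bqT T (bqmk T x) = bqmk T (T x) := rfl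

lemma bqT_iterate (T : X → X) (n : ℕ) (x : X) :
    (bqT T)^[n] (bqmk T x) = bqmk T (T^[n] x) := by
  induction n with
  | zero => rfl
  | succ n ih =>
      rw [Function.iterate_succ_apply', ih, bqT_mk]
      exact congrArg (bqmk T) (Function.iterate_succ_apply' T n x).symm

lemma bqT_equicontinuous (T : X → X) : IsEquicontinuousSys (bqT T) := by
  intro ε hε
  refine ⟨ε, hε, fun z w hzw n => ?_⟩
  induction z using Quotient.inductionOn with | _ x => ?_
  induction w using Quotient.inductionOn with | _ y => ?_
  have h1 : dist ((bqT T)^[n] (bqmk T x)) ((bqT T)^[n] (bqmk T y))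
      = besicovitch T (T^[n] x) (T^[n] y) := by
    rw [bqT_iterate, bqT_iterate, bqmk_dist]
  calc dist ((bqT T)^[n] (bqmk T x)) ((bqT T)^[n] (bqmk T y))
      = besicovitch T (T^[n] x) (T^[n] y) := h1
    _ ≤ besicovitch T x y := bes_iterate_le T x y n
    _ = dist (bqmk T x) (bqmk T y) := (bqmk_dist T x y).symm
    _ < ε := hzw

lemma bqmk_continuous {T : X → X} (hme : MeanEquicontinuous T) : Continuous (bqmk T) := by
  rw [Metric.continuous_iff]
  intro x ε hε
  obtain ⟨δ, hδ0, hδ⟩ := hme (ε/2) (by positivity)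
  refine ⟨δ, hδ0, fun a ha => ?_⟩
  rw [dist_comm, bqmk_dist]
  calc besicovitch T x a ≤ ε/2 := hδ x a (by rw [dist_comm]; exact ha.le)
    _ < ε := by linarith

lemma besQuot_compact {T : X → X} (hme : MeanEquicontinuous T) :
    CompactSpace (BesQuot T) := by
  constructor
  have h1 : (Set.univ : Set (BesQuot T)) = bqmk T '' Set.univ := by
    rw [Set.image_univ, (bqmk_surjective T).range_eq]
  rw [h1]
  exact isCompact_univ.image (bqmk_continuous hme)

/-- Key consequence of maximality: points in the same fibre of the maximal
equicontinuous factor map are at Besicovitch distance zero. -/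
lemma fiber_bes_zero [CompactSpace Y] {T : X → X} {S : Y → Y} {π : X → Y}
    (hmef : IsMEF T S π) (hme : MeanEquicontinuous T) {a b : X} (h : π a = π b) :
    besicovitch T a b = 0 := by
  haveI := besQuot_compact hme
  have hfac : IsFactorMap T (bqT T) (bqmk T) :=
    ⟨bqmk_continuous hme, bqmk_surjective T, funext fun x => (bqT_mk T x).symm⟩
  obtain ⟨ψ, -, hψ, -⟩ := hmef.2.2 (BesQuot T) (bqT T) (bqmk T) hfac (bqT_equicontinuous T)
  have h1 : bqmk T a = bqmk T b := by
    have ha := congrFun hψ a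
    have hb := congrFun hψ b
    simp only [Function.comp_apply] at ha hb
    rw [← ha, ← hb, h]
  exact Quotient.exact h1

end Bes

section Dyn

variable [CompactSpace X] [CompactSpace Y]

lemma minimal_surj {T : X → X} (hT : Continuous T) (hmin : IsMinimalTDS T) :
    Function.Surjective T := by
  intro y
  have hd : Dense (Set.range T) := by
    refine Dense.mono ?_ (hmin (T y))
    rintro _ ⟨n, rfl⟩
    exact ⟨T^[n] y, show T (T^[n] y) = T^[n] (T y) from
      (Function.iterate_succ_apply' T n y).symm.trans (Function.iterate_succ_apply T n y)⟩
  have hcl : IsClosed (Set.range T) := (isCompact_range hT).isClosed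
  have h2 : y ∈ Set.range T := by
    have := hd.closure_eq
    rw [hcl.closure_eq] at this
    rw [this]; trivial
  exact h2

lemma semiconj_iterate {T : X → X} {S : Y → Y} {π : X → Y} (h : π ∘ T = S ∘ π) (n : ℕ) (x : X) :
    π (T^[n] x) = S^[n] (π x) := by
  have hsc : Function.Semiconj π T S := fun a => congrFun h a
  exact (hsc.iterate_right n) x

lemma minimal_factor {T : X → X} {S : Y → Y} {π : X → Y}
    (hfac : IsFactorMap T S π) (hmin : IsMinimalTDS T) : IsMinimalTDS S := by
  obtain ⟨hπc, hπs, hπT⟩ := hfac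
  intro y
  obtain ⟨x, rfl⟩ := hπs y
  have he : (Set.range fun n : ℕ => S^[n] (π x)) = π '' Set.range (fun n : ℕ => T^[n] x) := by
    rw [← Set.range_comp]
    refine congrArg _ (funext fun n => ?_)
    exact (semiconj_iterate hπT n x).symm
  rw [he]
  intro z
  obtain ⟨x', rfl⟩ := hπs z
  have hx' : x' ∈ closure (Set.range fun n : ℕ => T^[n] x) := hmin x x'
  exact image_closure_subset_closure_image hπc ⟨x', hx', rfl⟩

lemma near_id {S : Y → Y} (hSe : IsEquicontinuousSys S) (hSs : Function.Surjective S) :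
    ∀ ε > 0, ∃ p : ℕ, 1 ≤ p ∧ ∀ y, dist (S^[p] y) y ≤ ε := by
  intro ε hε
  obtain ⟨δ, hδ0, hδ⟩ := hSe (ε/4) (by positivity)
  obtain ⟨t, -, htfin, htcov⟩ := finite_cover_balls_of_compact (isCompact_univ : IsCompact (Set.univ : Set Y)) hδ0
  haveI := htfin.fintype
  set u : ℕ → (t → Y) := fun n c => S^[n] (c : Y) with hu
  obtain ⟨L, -, φ, hφmono, hφlim⟩ :=
    isCompact_univ.tendsto_subseq (x := u) (fun n => Set.mem_univ _)
  rw [Metric.tendsto_atTop] at hφlim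
  obtain ⟨K, hK⟩ := hφlim (ε/8) (by positivity)
  have hnm : φ K < φ (K+1) := hφmono (Nat.lt_succ_self K)
  set n := φ K
  set m := φ (K+1)
  have hdu : dist (u n) (u m) < ε/4 := by
    calc dist (u n) (u m) ≤ dist (u n) L + dist L (u m) := dist_triangle _ _ _
      _ < ε/8 + ε/8 := by
          have h1 := hK K le_rfl
          have h2 := hK (K+1) (Nat.le_succ K)
          rw [dist_comm L (u m)]
          exact add_lt_add h1 h2
      _ = ε/4 := by ring
  have hyy : ∀ y : Y, dist (S^[n] y) (S^[m] y) ≤ 3*(ε/4) := by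
    intro y
    obtain ⟨c, hct, hyc⟩ : ∃ c ∈ t, y ∈ Metric.ball c δ := by
      have := htcov (Set.mem_univ y)
      simpa using this
    have h1 : ∀ k : ℕ, dist (S^[k] y) (S^[k] c) < ε/4 := hδ y c (Metric.mem_ball.1 hyc) 
    have h2 : dist (S^[n] c) (S^[m] c) ≤ dist (u n) (u m) := by
      have := dist_le_pi_dist (u n) (u m) ⟨c, hct⟩
      simpa [hu] using this
    calc dist (S^[n] y) (S^[m] y)
        ≤ dist (S^[n] y) (S^[n] c) + dist (S^[n] c) (S^[m] c) + dist (S^[m] c) (S^[m] y) :=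
          dist_triangle4 _ _ _ _
      _ ≤ ε/4 + ε/4 + ε/4 := by
          have h3 := h1 n
          have h4 := h1 m
          rw [dist_comm (S^[m] c) (S^[m] y)]
          exact add_le_add (add_le_add h3.le (h2.trans hdu.le)) h4.le
      _ = 3*(ε/4) := by ring
  refine ⟨m - n, by omega, fun z => ?_⟩
  obtain ⟨y, rfl⟩ := (hSs.iterate n) z
  have he : S^[m-n] (S^[n] y) = S^[m] y := by
    rw [← Function.iterate_add_apply]
    congr 1
    omega
  rw [he]
  calc dist (S^[m] y) (S^[n] y) = dist (S^[n] y) (S^[m] y) := dist_comm _ _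
    _ ≤ 3*(ε/4) := hyy y
    _ ≤ ε := by linarith

lemma equicontinuous_injective {S : Y → Y} (hSe : IsEquicontinuousSys S)
    (hSs : Function.Surjective S) : Function.Injective S := by
  intro a b hab
  refine eq_of_forall_dist_le fun ε hε => ?_
  obtain ⟨p, hp1, hp⟩ := near_id hSe hSs (ε/2) (by positivity)
  obtain ⟨q, rfl⟩ : ∃ q, p = q + 1 := ⟨p - 1, by omega⟩
  have h1 : S^[q+1] a = S^[q+1] b := by
    rw [Function.iterate_succ_apply, Function.iterate_succ_apply, hab]
  calc dist a b ≤ dist a (S^[q+1] a) + dist (S^[q+1] a) (S^[q+1] b) + dist (S^[q+1] b) b :=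
        dist_triangle4 _ _ _ _
    _ ≤ ε/2 + 0 + ε/2 := by
        refine add_le_add (add_le_add ?_ ?_) (hp b)
        · rw [dist_comm]; exact hp a
        · rw [h1, dist_self]
    _ = ε := by ring

lemma fiber_image {T : X → X} {S : Y → Y} {π : X → Y} (hπT : π ∘ T = S ∘ π)
    (hTs : Function.Surjective T) (hSi : Function.Injective S) (n : ℕ) (y : Y) :
    π ⁻¹' {S^[n] y} = T^[n] '' (π ⁻¹' {y}) := by
  ext z
  simp only [Set.mem_preimage, Set.mem_singleton_iff, Set.mem_image]
  constructor
  · intro hz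
    obtain ⟨w, rfl⟩ := (hTs.iterate n) z
    refine ⟨w, ?_, rfl⟩
    have h1 : S^[n] (π w) = S^[n] y := by rw [← semiconj_iterate hπT]; exact hz
    exact (hSi.iterate n) h1
  · rintro ⟨w, hw, rfl⟩
    rw [semiconj_iterate hπT, hw]

lemma open_small {π : X → Y} (hπ : Continuous π) (ε : ℝ) :
    IsOpen {y : Y | Metric.diam (π ⁻¹' {y}) < ε} := by
  rw [isOpen_iff_mem_nhds]
  intro y₀ hy₀
  simp only [Set.mem_setOf_eq] at hy₀
  set K := π ⁻¹' {y₀} with hK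
  set r := (ε - Metric.diam K)/3 with hr
  have hr0 : 0 < r := by rw [hr]; linarith
  set U := ⋃ x ∈ K, Metric.ball x r with hU
  have hbU : Bornology.IsBounded U := isCompact_univ.isBounded.subset (Set.subset_univ U)
  have hKU : K ⊆ U := fun x hx => Set.mem_biUnion hx (Metric.mem_ball_self hr0)
  have hUopen : IsOpen U := isOpen_biUnion fun _ _ => Metric.isOpen_ball
  have hUd : Metric.diam U ≤ Metric.diam K + 2*r := by
    refine Metric.diam_le_of_forall_dist_le (by positivity) ?_
    intro u hu v hv
    obtain ⟨a, ha, hua⟩ := Set.mem_iUnion₂.1 hu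
    obtain ⟨b, hb, hvb⟩ := Set.mem_iUnion₂.1 hv
    have hab : dist a b ≤ Metric.diam K :=
      Metric.dist_le_diam_of_mem (isCompact_univ.isBounded.subset (Set.subset_univ K)) ha hb
    have h1 : dist u a < r := Metric.mem_ball.1 hua
    have h2 : dist b v < r := by rw [dist_comm]; exact Metric.mem_ball.1 hvb
    calc dist u v ≤ dist u a + dist a b + dist b v := dist_triangle4 _ _ _ _
      _ ≤ Metric.diam K + 2*r := by linarith
  have hC : IsClosed (π '' Uᶜ) :=
    ((hUopen.isClosed_compl).isCompact.image hπ).isClosed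
  have hyC : y₀ ∈ (π '' Uᶜ)ᶜ := by
    rintro ⟨x, hx, hxy⟩
    exact hx (hKU (show x ∈ K from hxy))
  refine Filter.mem_of_superset (hC.isOpen_compl.mem_nhds hyC) ?_
  intro y hy
  simp only [Set.mem_setOf_eq]
  have hsub : π ⁻¹' {y} ⊆ U := by
    intro x hx
    by_contra hxU
    exact hy ⟨x, hxU, hx⟩
  calc Metric.diam (π ⁻¹' {y}) ≤ Metric.diam U := Metric.diam_mono hsub hbU
    _ ≤ Metric.diam K + 2*r := hUd
    _ < ε := by rw [hr]; linarith

lemma expansion {T : X → X} (hT : Continuous T) :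
    ∀ N : ℕ, ∀ ε > 0, ∃ δ > 0, ∀ n ≤ N, ∀ a b : X,
      dist a b ≤ δ → dist (T^[n] a) (T^[n] b) ≤ ε := by
  intro N
  induction N with
  | zero =>
      intro ε hε
      refine ⟨ε, hε, fun n hn a b hab => ?_⟩
      obtain rfl : n = 0 := Nat.le_zero.1 hn
      simpa using hab
  | succ N ih =>
      intro ε hε
      obtain ⟨δ₁, hδ₁0, h₁⟩ := ih ε hε
      have huc : UniformContinuous (T^[N+1]) :=
        CompactSpace.uniformContinuous_of_continuous (hT.iterate (N+1))
      obtain ⟨δ₂, hδ₂0, h₂⟩ := Metric.uniformContinuous_iff.1 huc ε hε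
      refine ⟨min δ₁ (δ₂/2), by positivity, fun n hn a b hab => ?_⟩
      by_cases hn' : n ≤ N
      · exact h₁ n hn' a b (hab.trans (min_le_left _ _))
      · obtain rfl : n = N + 1 := by omega
        exact (h₂ (lt_of_le_of_lt (hab.trans (min_le_right _ _)) (by linarith))).le

lemma cover_exists {S : Y → Y} (hS : Continuous S) (hSmin : IsMinimalTDS S)
    {V : Set Y} (hV : IsOpen V) (hne : V.Nonempty) :
    ∃ N, ∀ y, ∃ n ≤ N, S^[n] y ∈ V := by
  have hcov : (Set.univ : Set Y) ⊆ ⋃ n : ℕ, S^[n] ⁻¹' V := by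
    intro y _
    obtain ⟨x, hmem, hxV⟩ := (hSmin y).exists_mem_open hV hne
    obtain ⟨n, rfl⟩ := hmem
    exact Set.mem_iUnion.2 ⟨n, hxV⟩
  obtain ⟨tf, htf⟩ := isCompact_univ.elim_finite_subcover (fun n : ℕ => S^[n] ⁻¹' V)
    (fun n => hV.preimage (hS.iterate n)) hcov
  obtain ⟨N, hN⟩ := tf.exists_nat_subset_range
  refine ⟨N, fun y => ?_⟩
  obtain ⟨n, hnt, hny⟩ := Set.mem_iUnion₂.1 (htf (Set.mem_univ y))
  exact ⟨n, (Finset.mem_range.1 (hN hnt)).le, hny⟩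

lemma limsup_sum_nonpos {ι : Type} (s : Finset ι) (u : ι → ℕ → ℝ) {D : ℝ}
    (h0 : ∀ i n, 0 ≤ u i n) (hD : ∀ i n, u i n ≤ D)
    (hl : ∀ i ∈ s, Filter.atTop.limsup (u i) ≤ 0) :
    Filter.atTop.limsup (fun n => ∑ i ∈ s, u i n) ≤ 0 := by
  classical
  induction s using Finset.induction_on with
  | empty => simp [Filter.limsup_const]
  | @insert a s ha ih =>
      have h₁ : Filter.IsBoundedUnder (· ≥ ·) Filter.atTop (u a) :=
        Filter.isBoundedUnder_of ⟨0, fun n => h0 a n⟩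
      have h₂ : Filter.IsBoundedUnder (· ≤ ·) Filter.atTop (u a) :=
        Filter.isBoundedUnder_of ⟨D, fun n => hD a n⟩
      have h₃ : Filter.IsCoboundedUnder (· ≤ ·) Filter.atTop (fun n => ∑ i ∈ s, u i n) :=
        (Filter.isBoundedUnder_of ⟨0, fun n => Finset.sum_nonneg fun i _ => h0 i n⟩ :
          Filter.IsBoundedUnder (· ≥ ·) Filter.atTop _).isCoboundedUnder_le
      have h₄ : Filter.IsBoundedUnder (· ≤ ·) Filter.atTop (fun n => ∑ i ∈ s, u i n) :=
        Filter.isBoundedUnder_of ⟨s.card • D, fun n =>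
          Finset.sum_le_card_nsmul _ _ _ fun i _ => hD i n⟩
      have he : (fun n => ∑ i ∈ insert a s, u i n)
          = (u a + fun n => ∑ i ∈ s, u i n) := by
        funext n
        simp [Finset.sum_insert ha]
      rw [he]
      calc Filter.atTop.limsup (u a + fun n => ∑ i ∈ s, u i n)
          ≤ Filter.atTop.limsup (u a) + Filter.atTop.limsup (fun n => ∑ i ∈ s, u i n) :=
            limsup_add_le h₁ h₂ h₃ h₄
        _ ≤ 0 + 0 := add_le_add (hl a (Finset.mem_insert_self a s))
            (ih fun i hi => hl i (Finset.mem_insert_of_mem hi))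
        _ = 0 := add_zero 0

lemma exists_good_time {T : X → X} {F : Set X} (hF : F.Finite)
    (hbz : ∀ a ∈ F, ∀ b ∈ F, besicovitch T a b = 0) {δ : ℝ} (hδ : 0 < δ) :
    ∃ n : ℕ, ∀ a ∈ F, ∀ b ∈ F, dist (T^[n] a) (T^[n] b) ≤ δ := by
  classical
  by_contra hcon
  push_neg at hcon
  set Fs := hF.toFinset with hFs
  set P := Fs ×ˢ Fs with hP
  set g : ℕ → ℝ := fun n => ∑ p ∈ P, birkhoffDist T p.1 p.2 n with hg
  have hgle : Filter.atTop.limsup g ≤ 0 := by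
    refine limsup_sum_nonpos P (fun p n => birkhoffDist T p.1 p.2 n)
      (fun p n => birkhoff_nonneg T _ _ n) (fun p n => birkhoff_le T _ _ n) ?_
    intro p hp
    rw [Finset.mem_product] at hp
    have ha : p.1 ∈ F := hF.mem_toFinset.1 hp.1
    have hb : p.2 ∈ F := hF.mem_toFinset.1 hp.2
    exact le_of_eq (hbz p.1 ha p.2 hb)
  have hlb : ∀ n : ℕ, 1 ≤ n → δ ≤ g n := by
    intro n hn
    have hn0 : (0:ℝ) < n := by exact_mod_cast hn
    have he : g n = (∑ i ∈ Finset.Icc 1 n, ∑ p ∈ P, dist (T^[i] p.1) (T^[i] p.2)) / n := by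
      rw [hg]
      simp only [birkhoffDist]
      rw [← Finset.sum_div, Finset.sum_comm]
    have hinner : ∀ i : ℕ, δ ≤ ∑ p ∈ P, dist (T^[i] p.1) (T^[i] p.2) := by
      intro i
      obtain ⟨a, ha, b, hb, hd⟩ := hcon i
      have hmem : (a, b) ∈ P := Finset.mem_product.2 ⟨hF.mem_toFinset.2 ha, hF.mem_toFinset.2 hb⟩
      calc δ ≤ dist (T^[i] a) (T^[i] b) := hd.le
        _ ≤ ∑ p ∈ P, dist (T^[i] p.1) (T^[i] p.2) :=
            Finset.single_le_sum (f := fun p => dist (T^[i] p.1) (T^[i] p.2))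
              (fun p _ => dist_nonneg) hmem
    have hsum : (n : ℝ) * δ ≤ ∑ i ∈ Finset.Icc 1 n, ∑ p ∈ P, dist (T^[i] p.1) (T^[i] p.2) := by
      calc (n : ℝ) * δ = (Finset.Icc 1 n).card • δ := by
            rw [Nat.card_Icc]; simp [nsmul_eq_mul]
        _ ≤ ∑ i ∈ Finset.Icc 1 n, ∑ p ∈ P, dist (T^[i] p.1) (T^[i] p.2) :=
            Finset.card_nsmul_le_sum _ _ _ fun i _ => hinner i
    rw [he]
    rw [le_div_iff₀ hn0]
    linarith [hsum]
  have hub : δ ≤ Filter.atTop.limsup g := by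
    refine Filter.le_limsup_of_frequently_le ?_ ?_
    · rw [Filter.frequently_atTop]
      intro a
      exact ⟨max a 1, le_max_left _ _, hlb _ (le_max_right _ _)⟩
    · exact Filter.isBoundedUnder_of ⟨P.card • Metric.diam (Set.univ : Set X),
        fun n => Finset.sum_le_card_nsmul _ _ _ fun p _ => birkhoff_le T _ _ n⟩
  linarith

end Dyn

end MefAux

open MefAux

/-- for a minimal mean equicontinuous system, if the maximal
equicontinuous factor map has some finite fibre then it is almost 1-1. -/
theorem mef_almost_one_to_one_of_finite_fiber
    {X Y : Type} [MetricSpace X] [CompactSpace X] [MetricSpace Y] [CompactSpace Y]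
    (T : X → X) (S : Y → Y) (hT : Continuous T) (hS : Continuous S)
    (π : X → Y) (hmef : IsMEF T S π)
    (hmin : IsMinimalTDS T) (hme : MeanEquicontinuous T)
    (hfin : ∃ y : Y, (π ⁻¹' {y}).Finite) :
    {y : Y | ∃ x : X, π ⁻¹' {y} = {x}} ∈ residual Y := by
  classical
  obtain ⟨y₀, hF⟩ := hfin
  obtain ⟨hπc, hπs, hπT⟩ := hmef.1
  -- basic dynamical facts
  have hTs : Function.Surjective T := minimal_surj hT hmin
  have hSmin : IsMinimalTDS S := minimal_factor ⟨hπc, hπs, hπT⟩ hmin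
  have hSs : Function.Surjective S := minimal_surj hS hSmin
  have hSi : Function.Injective S := equicontinuous_injective hmef.2.1 hSs
  have hfib : ∀ (n : ℕ) (y : Y), π ⁻¹' {S^[n] y} = T^[n] '' (π ⁻¹' {y}) :=
    fun n y => fiber_image hπT hTs hSi n y
  -- Besicovitch distance vanishes on fibres
  have hbz : ∀ a ∈ π ⁻¹' {y₀}, ∀ b ∈ π ⁻¹' {y₀}, besicovitch T a b = 0 := by
    intro a ha b hb
    exact fiber_bes_zero hmef hme (by
      simp only [Set.mem_preimage, Set.mem_singleton_iff] at ha hb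
      rw [ha, hb])
  -- arbitrarily small fibres along the orbit of y₀
  have hsmall : ∀ δ > 0, ∃ n : ℕ, Metric.diam (π ⁻¹' {S^[n] y₀}) ≤ δ := by
    intro δ hδ
    obtain ⟨n, hn⟩ := exists_good_time hF hbz hδ
    refine ⟨n, ?_⟩
    rw [hfib n y₀]
    refine Metric.diam_le_of_forall_dist_le hδ.le ?_
    rintro _ ⟨a, ha, rfl⟩ _ ⟨b, hb, rfl⟩
    exact hn a ha b hb
  -- for each ε > 0, the set of points with small fibre is open and dense
  have hopen : ∀ ε : ℝ, IsOpen {y : Y | Metric.diam (π ⁻¹' {y}) < ε} :=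
    fun ε => open_small hπc ε
  have hdense : ∀ ε > 0, Dense {y : Y | Metric.diam (π ⁻¹' {y}) < ε} := by
    intro ε hε
    rw [dense_iff_inter_open]
    intro V hV hVne
    obtain ⟨N, hN⟩ := cover_exists hS hSmin hV hVne
    obtain ⟨δ, hδ0, hδ⟩ := expansion hT N (ε/2) (by positivity)
    obtain ⟨n₁, hn₁⟩ := hsmall δ hδ0
    set y' := S^[n₁] y₀ with hy'
    obtain ⟨m, hmN, hmV⟩ := hN y'
    refine ⟨S^[m] y', hmV, ?_⟩
    simp only [Set.mem_setOf_eq]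
    rw [hfib m y']
    have hbd : Metric.diam (T^[m] '' (π ⁻¹' {y'})) ≤ ε/2 := by
      refine Metric.diam_le_of_forall_dist_le (by positivity) ?_
      rintro _ ⟨a, ha, rfl⟩ _ ⟨b, hb, rfl⟩
      refine hδ m hmN a b ?_
      calc dist a b ≤ Metric.diam (π ⁻¹' {y'}) :=
            Metric.dist_le_diam_of_mem
              (isCompact_univ.isBounded.subset (Set.subset_univ _)) ha hb
        _ ≤ δ := hn₁
    linarith
  -- conclude by Baire category
  have hsub : (⋂ k : ℕ, {y : Y | Metric.diam (π ⁻¹' {y}) < 1/(k+1)})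
      ⊆ {y : Y | ∃ x : X, π ⁻¹' {y} = {x}} := by
    intro y hy
    obtain ⟨x, hx⟩ := hπs y
    have hxm : x ∈ π ⁻¹' {y} := hx
    have hd0 : Metric.diam (π ⁻¹' {y}) = 0 := by
      refine le_antisymm ?_ Metric.diam_nonneg
      by_contra hpos
      push_neg at hpos
      obtain ⟨k, hk⟩ := exists_nat_one_div_lt hpos
      have := Set.mem_iInter.1 hy k
      simp only [Set.mem_setOf_eq] at this
      linarith
    refine ⟨x, Set.eq_singleton_iff_unique_mem.2 ⟨hxm, fun z hz => ?_⟩⟩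
    have hdz : dist z x ≤ 0 := by
      rw [← hd0]
      exact Metric.dist_le_diam_of_mem
        (isCompact_univ.isBounded.subset (Set.subset_univ _)) hz hxm
    exact dist_le_zero.1 hdz
  refine Filter.mem_of_superset ?_ hsub
  rw [countable_iInter_mem]
  intro k
  refine residual_of_dense_open (hopen _) (hdense _ ?_)
  positivity
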